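/- Let n, m be natural numbers, ε > 0, R_o ∈ [0,1), and set τ = ⌊(1-R_o)·m/2⌋. If each of m independent inner blocks fails with probability P_e ≤ 2^{-n^{0.5-ε}}, then the probability that more than τ blocks fail is at most 2^{-(n^{0.5-ε}(1-R_o)/2 - 1)·m}. -/
import Mathlib


open Finset Real in
/-- Lemma 1: if each of `m` inner blocks fails with probability
`P_e ≤ 2^(-n^(0.5-ε))` and the outer code corrects `τ = ⌊(1-R_o)m/2⌋` block errors,
the frame error probability (the binomial tail beyond `τ`) is at most
`2^(-(n^(0.5-ε)(1-R_o)/2 - 1)·m)`. -/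
theorem rs_polar_frame_error_bound (n m : ℕ) (ε : ℝ) (hε : 0 < ε)
    (Ro : ℝ) (hRo0 : 0 ≤ Ro) (hRo1 : Ro < 1)
    (τ : ℕ) (hτ : τ = ⌊(1 - Ro) * (m : ℝ) / 2⌋₊)
    (Pe : ℝ) (hPe0 : 0 ≤ Pe) (hPe : Pe ≤ (2 : ℝ) ^ (-(n : ℝ) ^ ((0.5 : ℝ) - ε))) :
    ∑ i ∈ Finset.Icc (τ + 1) m, (m.choose i : ℝ) * Pe ^ i * (1 - Pe) ^ (m - i)
      ≤ (2 : ℝ) ^ (-(((n : ℝ) ^ ((0.5 : ℝ) - ε) * (1 - Ro) / 2 - 1) * (m : ℝ))) := by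
  set x : ℝ := (n : ℝ) ^ ((0.5 : ℝ) - ε) with hxdef
  have hx : 0 ≤ x := Real.rpow_nonneg (Nat.cast_nonneg n) _
  have hPe1 : Pe ≤ 1 :=
    hPe.trans (Real.rpow_le_one_of_one_le_of_nonpos one_le_two (neg_nonpos.mpr hx))
  have h1Pe : 0 ≤ 1 - Pe := by linarith
  -- step 1: bound the tail sum by 2^m * Pe^(τ+1)
  have hsum : ∑ i ∈ Finset.Icc (τ + 1) m, (m.choose i : ℝ) * Pe ^ i * (1 - Pe) ^ (m - i)
      ≤ (2 : ℝ) ^ m * Pe ^ (τ + 1) := by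
    calc ∑ i ∈ Finset.Icc (τ + 1) m, (m.choose i : ℝ) * Pe ^ i * (1 - Pe) ^ (m - i)
        ≤ ∑ i ∈ Finset.Icc (τ + 1) m, (m.choose i : ℝ) * Pe ^ (τ + 1) := by
          apply Finset.sum_le_sum
          intro i hi
          simp only [Finset.mem_Icc] at hi
          have h1 : Pe ^ i ≤ Pe ^ (τ + 1) := pow_le_pow_of_le_one hPe0 hPe1 hi.1
          have h2 : (1 - Pe) ^ (m - i) ≤ 1 := pow_le_one₀ h1Pe (by linarith)
          have hc : (0:ℝ) ≤ (m.choose i : ℝ) := Nat.cast_nonneg _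
          calc (m.choose i : ℝ) * Pe ^ i * (1 - Pe) ^ (m - i)
              ≤ (m.choose i : ℝ) * Pe ^ i * 1 := by
                apply mul_le_mul_of_nonneg_left h2
                exact mul_nonneg hc (pow_nonneg hPe0 _)
            _ = (m.choose i : ℝ) * Pe ^ i := by ring
            _ ≤ (m.choose i : ℝ) * Pe ^ (τ + 1) := mul_le_mul_of_nonneg_left h1 hc
      _ ≤ ∑ i ∈ Finset.range (m + 1), (m.choose i : ℝ) * Pe ^ (τ + 1) := by
          apply Finset.sum_le_sum_of_subset_of_nonneg
          · intro i hi
            simp only [Finset.mem_Icc] at hi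
            simpa [Finset.mem_range] using Nat.lt_succ_of_le hi.2
          · intro i _ _
            exact mul_nonneg (Nat.cast_nonneg _) (pow_nonneg hPe0 _)
      _ = (2 : ℝ) ^ m * Pe ^ (τ + 1) := by
          rw [← Finset.sum_mul]
          congr 1
          have := Nat.sum_range_choose m
          have : ∑ i ∈ Finset.range (m + 1), (m.choose i : ℝ) = ((2 ^ m : ℕ) : ℝ) := by
            exact_mod_cast congrArg (Nat.cast : ℕ → ℝ) this
          simpa using this
  refine hsum.trans ?_
  -- step 2: 2^m * Pe^(τ+1) ≤ RHS
  have hτ1 : (1 - Ro) * (m : ℝ) / 2 < (τ : ℝ) + 1 := by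
    rw [hτ]
    push_cast
    exact Nat.lt_floor_add_one _
  have hPepow : Pe ^ (τ + 1) ≤ (2 : ℝ) ^ (-(x * ((1 - Ro) * (m : ℝ) / 2))) := by
    calc Pe ^ (τ + 1) ≤ ((2 : ℝ) ^ (-x)) ^ (τ + 1) :=
          pow_le_pow_left₀ hPe0 hPe _
      _ = (2 : ℝ) ^ (-x * ((τ : ℝ) + 1)) := by
          rw [← Real.rpow_natCast ((2:ℝ) ^ (-x)) (τ + 1), ← Real.rpow_mul (by norm_num)]
          push_cast
          ring_nf
      _ ≤ (2 : ℝ) ^ (-(x * ((1 - Ro) * (m : ℝ) / 2))) := by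
          apply Real.rpow_le_rpow_of_exponent_le one_le_two
          have := mul_le_mul_of_nonneg_left hτ1.le hx
          nlinarith
  calc (2 : ℝ) ^ m * Pe ^ (τ + 1)
      ≤ (2 : ℝ) ^ m * (2 : ℝ) ^ (-(x * ((1 - Ro) * (m : ℝ) / 2))) :=
        mul_le_mul_of_nonneg_left hPepow (by positivity)
    _ = (2 : ℝ) ^ ((m : ℝ) + -(x * ((1 - Ro) * (m : ℝ) / 2))) := by
        rw [Real.rpow_add (by norm_num), Real.rpow_natCast]
    _ = (2 : ℝ) ^ (-((x * (1 - Ro) / 2 - 1) * (m : ℝ))) := by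
        congr 1
        ring
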